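/- Let A ∈ ℝ^{m×N}, 1 ≤ k ≤ N, and ‖·‖_X be a norm on ℝ^N. Suppose there exists a decoder Δ: ℝ^m → ℝ^N such that min{‖x − Δ(|Ax|)‖_X, ‖x + Δ(|Ax|)‖_X} ≤ C₀·σ_k(x)_X for all x ∈ ℝ^N. Then for every index set I ⊆ {1,…,m} and every η₁ ∈ 𝒩(A_I), η₂ ∈ 𝒩(A_{I^c}), min{‖η₁‖_X, ‖η₂‖_X} ≤ (C₀/2)·σ_k(η₁ − η₂)_X + (C₀/2)·σ_k(η₁ + η₂)_X. -/

import Mathlib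

open Finset

noncomputable section

/-- A vector is `k`-sparse if it has at most `k` nonzero entries. -/
def sparse {N : ℕ} (k : ℕ) (x : Fin N → ℝ) : Prop :=
  (Finset.univ.filter (fun i => x i ≠ 0)).card ≤ k

/-- Sparsity with a real bound (used for orders like `t·k` with `t` real). -/
def sparseR {N : ℕ} (k : ℝ) (x : Fin N → ℝ) : Prop :=
  ((Finset.univ.filter (fun i => x i ≠ 0)).card : ℝ) ≤ k

/-- The ℓ₁ norm. -/
def l1 {N : ℕ} (x : Fin N → ℝ) : ℝ := ∑ i, |x i|

/-- The squared ℓ₂ norm. -/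
def l2sq {N : ℕ} (x : Fin N → ℝ) : ℝ := ∑ i, (x i) ^ 2

/-- The ℓ₂ norm. -/
def l2 {N : ℕ} (x : Fin N → ℝ) : ℝ := Real.sqrt (l2sq x)

/-- The ℓ_p norm for real `p ≥ 1`. -/
def lpnorm {N : ℕ} (p : ℝ) (x : Fin N → ℝ) : ℝ := (∑ i, |x i| ^ p) ^ (1 / p)

/-- Best `k`-term approximation error in ℓ₁. -/
def sigma1 {N : ℕ} (k : ℕ) (x : Fin N → ℝ) : ℝ :=
  sInf {t | ∃ z : Fin N → ℝ, sparse k z ∧ t = l1 (x - z)}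

/-- Best `k`-term approximation error in a general norm `X`. -/
def sigmaX {N : ℕ} (X : (Fin N → ℝ) → ℝ) (k : ℕ) (x : Fin N → ℝ) : ℝ :=
  sInf {t | ∃ z : Fin N → ℝ, sparse k z ∧ t = X (x - z)}

/-- Best `k`-term approximation error in the ℓ_q norm. -/
def sigmaQ {N : ℕ} (q : ℝ) (k : ℕ) (x : Fin N → ℝ) : ℝ :=
  sInf {t | ∃ z : Fin N → ℝ, sparse k z ∧ t = lpnorm q (x - z)}

/-- The entrywise absolute value of `A x`. -/
def absMulVec {m N : ℕ} (A : Matrix (Fin m) (Fin N) ℝ) (x : Fin N → ℝ) : Fin m → ℝ :=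
  fun i => |A.mulVec x i|

/-- `X` is a norm on `ℝ^N`: triangle inequality, absolute homogeneity, definiteness. -/
def IsNorm {N : ℕ} (X : (Fin N → ℝ) → ℝ) : Prop :=
  (∀ x y, X (x + y) ≤ X x + X y) ∧ (∀ (c : ℝ) (x), X (c • x) = |c| * X x) ∧
  (∀ x, X x = 0 → x = 0)

/-! Since `A η₁` vanishes on `I` and `A η₂` off `I`, the vectors `η₁ + η₂` and `η₁ - η₂` have
the same phaseless measurements `|A x|`, so `Δ` returns one vector `d` for both. Whichever signs
of `d` realise the two minima, the triangle inequality recombines them into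
`2 η₁ = (η₁ + η₂) + (η₁ - η₂)` or `2 η₂ = (η₁ + η₂) - (η₁ - η₂)`. -/

namespace IsNorm

variable {N : ℕ} {X : (Fin N → ℝ) → ℝ}

lemma map_neg (hX : IsNorm X) (x : Fin N → ℝ) : X (-x) = X x := by
  simpa using hX.2.1 (-1) x

lemma map_sub_le (hX : IsNorm X) (x y : Fin N → ℝ) : X (x - y) ≤ X x + X y := by
  simpa [sub_eq_add_neg, hX.map_neg] using hX.1 x (-y)

lemma min_le_min_add_min (hX : IsNorm X) (u v d : Fin N → ℝ) :
    min (X (u + v)) (X (u - v)) ≤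
      min (X (u - d)) (X (u + d)) + min (X (v - d)) (X (v + d)) := by
  have h₁ : X (u + v) ≤ X (u - d) + X (v + d) := by
    simpa using hX.1 (u - d) (v + d)
  have h₂ : X (u + v) ≤ X (u + d) + X (v - d) := by
    simpa using hX.1 (u + d) (v - d)
  have h₃ : X (u - v) ≤ X (u - d) + X (v - d) := by
    simpa using hX.map_sub_le (u - d) (v - d)
  have h₄ : X (u - v) ≤ X (u + d) + X (v + d) := by
    simpa using hX.map_sub_le (u + d) (v + d)
  rcases min_choice (X (u - d)) (X (u + d)) with hu | hu <;>
    rcases min_choice (X (v - d)) (X (v + d)) with hv | hv <;>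
    rw [hu, hv] <;>
    linarith [min_le_left (X (u + v)) (X (u - v)), min_le_right (X (u + v)) (X (u - v))]

end IsNorm

lemma absMulVec_add_eq_sub {m N : ℕ} (A : Matrix (Fin m) (Fin N) ℝ) (I : Finset (Fin m))
    {η₁ η₂ : Fin N → ℝ} (h₁ : ∀ i ∈ I, A.mulVec η₁ i = 0) (h₂ : ∀ i ∉ I, A.mulVec η₂ i = 0) :
    absMulVec A (η₁ + η₂) = absMulVec A (η₁ - η₂) := by
  funext i
  by_cases hi : i ∈ I
  · simp [absMulVec, Matrix.mulVec_add, Matrix.mulVec_sub, h₁ i hi]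
  · simp [absMulVec, Matrix.mulVec_add, Matrix.mulVec_sub, h₂ i hi]

theorem stmt8_general {m N k : ℕ}
    (A : Matrix (Fin m) (Fin N) ℝ) (X : (Fin N → ℝ) → ℝ) (hX : IsNorm X) (C₀ : ℝ)
    (Δ : (Fin m → ℝ) → (Fin N → ℝ))
    (hΔ : ∀ x : Fin N → ℝ,
      min (X (x - Δ (absMulVec A x))) (X (x + Δ (absMulVec A x))) ≤ C₀ * sigmaX X k x) :
    ∀ I : Finset (Fin m), ∀ η₁ η₂ : Fin N → ℝ,
      (∀ i ∈ I, A.mulVec η₁ i = 0) → (∀ i ∉ I, A.mulVec η₂ i = 0) →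
      min (X η₁) (X η₂) ≤
        C₀ / 2 * sigmaX X k (η₁ - η₂) + C₀ / 2 * sigmaX X k (η₁ + η₂) := by
  intro I η₁ η₂ h₁ h₂
  have h_plus := hΔ (η₁ + η₂)
  have h_minus := hΔ (η₁ - η₂)
  rw [← absMulVec_add_eq_sub A I h₁ h₂] at h_minus
  have key := hX.min_le_min_add_min (η₁ + η₂) (η₁ - η₂) (Δ (absMulVec A (η₁ + η₂)))
  rw [show η₁ + η₂ + (η₁ - η₂) = (2 : ℝ) • η₁ by module,
    show η₁ + η₂ - (η₁ - η₂) = (2 : ℝ) • η₂ by module, hX.2.1, hX.2.1, abs_two,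
    ← mul_min_of_nonneg _ _ zero_le_two] at key
  linarith

/-- necessary null space condition for phaseless instance optimality. -/
theorem stmt8 {m N k : ℕ} (hk1 : 1 ≤ k) (hkN : k ≤ N)
    (A : Matrix (Fin m) (Fin N) ℝ) (X : (Fin N → ℝ) → ℝ) (hX : IsNorm X) (C₀ : ℝ)
    (Δ : (Fin m → ℝ) → (Fin N → ℝ))
    (hΔ : ∀ x : Fin N → ℝ,
      min (X (x - Δ (absMulVec A x))) (X (x + Δ (absMulVec A x))) ≤ C₀ * sigmaX X k x) :
    ∀ I : Finset (Fin m), ∀ η₁ η₂ : Fin N → ℝ,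
      (∀ i ∈ I, A.mulVec η₁ i = 0) → (∀ i ∉ I, A.mulVec η₂ i = 0) →
      min (X η₁) (X η₂) ≤
        C₀ / 2 * sigmaX X k (η₁ - η₂) + C₀ / 2 * sigmaX X k (η₁ + η₂) :=
  stmt8_general A X hX C₀ Δ hΔ
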